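/- arXiv:1607.05053 — 4 statements merged into one kernel-verified Lean document; each statement's English description precedes it below -/
import Mathlib

section
/- Let A_1, …, A_n be finite subsets of an abelian group G. Then (E^+(⋃_{i=1}^n A_i))^{1/4} ≤ Σ_{i=1}^n (E^+(A_i))^{1/4}, where E^+ denotes additive energy. -/
open Finset Pointwise

/-- Additive energy between finite sets `A` and `B`: the number of quadruples
`(a, a', b, b') ∈ A × A × B × B` with `a + b = a' + b'`. -/
def addE {G : Type*} [AddCommGroup G] [DecidableEq G] (A B : Finset G) : ℕ :=
  (((A ×ˢ A) ×ˢ B ×ˢ B).filter fun x => x.1.1 + x.2.1 = x.1.2 + x.2.2).card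

/-!
Every solution of `a + b = c + d` in `U = ⋃ Aᵢ` is a solution in some `Aᵢ × Aⱼ × Aₖ × Aₗ`, so
`E[U] ≤ ∑ addEnergy₄ Aᵢ Aⱼ Aₖ Aₗ`. Cauchy–Schwarz over the common value of `a + b = c + d` bounds
`addEnergy₄ A B C D ^ 2` by `E[A, B] * E[C, D]`, and over the common value of `a₁ - a₂ = b₂ - b₁`
it bounds `E[A, B] ^ 2` by `E[A] * E[B]`. So each term is at most the product of the four
`E[Aᵢ] ^ (1/4)`, and these products sum to `(∑ E[Aᵢ] ^ (1/4)) ^ 4`.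
-/

open scoped Combinatorics.Additive

namespace Finset

section Coincidences

variable {α β γ : Type*} [DecidableEq γ]

def coincidences (s : Finset α) (t : Finset β) (f : α → γ) (g : β → γ) : Finset (α × β) :=
  {x ∈ s ×ˢ t | f x.1 = g x.2}

lemma card_coincidences_eq_sum {s : Finset α} {t : Finset β} {f : α → γ} {g : β → γ}
    {u : Finset γ} (hf : (s : Set α).MapsTo f u) :
    #(coincidences s t f g) = ∑ c ∈ u, #{a ∈ s | f a = c} * #{b ∈ t | g b = c} := by
  rw [coincidences, card_eq_sum_card_fiberwise (f := fun x => f x.1) (t := u)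
    fun x hx => hf (mem_product.1 (mem_filter.1 hx).1).1]
  refine sum_congr rfl fun c _ => ?_
  rw [← card_product]
  congr 1
  ext ⟨a, b⟩
  simp only [mem_filter, mem_product]
  grind

lemma card_coincidences_sq_le (s : Finset α) (t : Finset β) (f : α → γ) (g : β → γ) :
    #(coincidences s t f g) ^ 2 ≤ #(coincidences s s f f) * #(coincidences t t g g) := by
  set u := s.image f ∪ t.image g
  have hf : (s : Set α).MapsTo f u := fun a ha => mem_union_left _ (mem_image_of_mem f ha)
  have hg : (t : Set β).MapsTo g u := fun b hb => mem_union_right _ (mem_image_of_mem g hb)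
  rw [card_coincidences_eq_sum hf, card_coincidences_eq_sum hf, card_coincidences_eq_sum hg]
  simpa only [sq] using sum_mul_sq_le_sq_mul_sq u (fun c => #{a ∈ s | f a = c})
    fun c => #{b ∈ t | g b = c}

end Coincidences

section Add

variable {G ι : Type*} [Add G] [DecidableEq G]

def addEnergy₄ (A B C D : Finset G) : ℕ :=
  #(coincidences (A ×ˢ B) (C ×ˢ D) (fun p => p.1 + p.2) (fun p => p.1 + p.2))

lemma addEnergy_eq_addEnergy₄ (A B : Finset G) : E[A, B] = addEnergy₄ A B A B :=
  addEnergy_eq_card_filter A B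

lemma addEnergy₄_sq_le (A B C D : Finset G) : addEnergy₄ A B C D ^ 2 ≤ E[A, B] * E[C, D] := by
  rw [addEnergy_eq_addEnergy₄, addEnergy_eq_addEnergy₄]
  exact card_coincidences_sq_le ..

lemma addEnergy₄_biUnion_le (s t u v : Finset ι) (A B C D : ι → Finset G) :
    addEnergy₄ (s.biUnion A) (t.biUnion B) (u.biUnion C) (v.biUnion D) ≤
      ∑ i ∈ s, ∑ j ∈ t, ∑ k ∈ u, ∑ l ∈ v, addEnergy₄ (A i) (B j) (C k) (D l) := by
  calc addEnergy₄ (s.biUnion A) (t.biUnion B) (u.biUnion C) (v.biUnion D)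
      ≤ #(((s ×ˢ t) ×ˢ u ×ˢ v).biUnion fun p => coincidences (A p.1.1 ×ˢ B p.1.2)
          (C p.2.1 ×ˢ D p.2.2) (fun p => p.1 + p.2) (fun p => p.1 + p.2)) := by
        refine card_le_card ?_
        rintro ⟨⟨a, b⟩, c, d⟩
        simp only [coincidences, mem_filter, mem_product, mem_biUnion]
        rintro ⟨⟨⟨⟨i, hi, ha⟩, j, hj, hb⟩, ⟨k, hk, hc⟩, l, hl, hd⟩, h⟩
        exact ⟨((i, j), k, l), ⟨⟨hi, hj⟩, hk, hl⟩, ⟨⟨ha, hb⟩, hc, hd⟩, h⟩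
    _ ≤ _ := card_biUnion_le
    _ = _ := by simp only [sum_product, addEnergy₄]

end Add

section AddCommGroup

variable {G : Type*} [AddCommGroup G] [DecidableEq G]

lemma addE_eq_addEnergy (A B : Finset G) : addE A B = E[A, B] := rfl

lemma card_coincidences_sub (A B : Finset G) :
    #(coincidences (A ×ˢ A) (B ×ˢ B) (fun p => p.1 - p.2) (fun p => p.1 - p.2)) = E[A, B] :=
  card_equiv ((Equiv.refl _).prodCongr (Equiv.prodComm _ _)) <| by
    rintro ⟨⟨a₁, a₂⟩, b₁, b₂⟩
    simp [coincidences, sub_eq_sub_iff_add_eq_add, add_comm, and_comm]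

lemma addEnergy_sq_le (A B : Finset G) : E[A, B] ^ 2 ≤ E[A] * E[B] := by
  rw [← card_coincidences_sub A B, ← card_coincidences_sub A A, ← card_coincidences_sub B B]
  exact card_coincidences_sq_le ..

lemma addEnergy₄_pow_four_le (A B C D : Finset G) :
    addEnergy₄ A B C D ^ 4 ≤ E[A] * E[B] * (E[C] * E[D]) :=
  calc addEnergy₄ A B C D ^ 4 = (addEnergy₄ A B C D ^ 2) ^ 2 := by ring
    _ ≤ (E[A, B] * E[C, D]) ^ 2 := by gcongr; exact addEnergy₄_sq_le ..
    _ = E[A, B] ^ 2 * E[C, D] ^ 2 := mul_pow ..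
    _ ≤ _ := by gcongr <;> exact addEnergy_sq_le ..

lemma addEnergy₄_le_mul_rpow (A B C D : Finset G) :
    (addEnergy₄ A B C D : ℝ) ≤ (E[A] : ℝ) ^ ((1 : ℝ) / 4) * (E[B] : ℝ) ^ ((1 : ℝ) / 4) *
      ((E[C] : ℝ) ^ ((1 : ℝ) / 4) * (E[D] : ℝ) ^ ((1 : ℝ) / 4)) := by
  have root_pow (x : ℕ) : ((x : ℝ) ^ ((1 : ℝ) / 4)) ^ 4 = x := by
    rw [one_div, ← Nat.cast_ofNat, Real.rpow_inv_natCast_pow (Nat.cast_nonneg _) four_ne_zero]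
  refine le_of_pow_le_pow_left₀ four_ne_zero (by positivity) ?_
  simp only [mul_pow, root_pow]
  exact_mod_cast addEnergy₄_pow_four_le A B C D

end AddCommGroup

end Finset

theorem stmt3 {G : Type*} [AddCommGroup G] [DecidableEq G] (n : ℕ) (A : Fin n → Finset G) :
    (addE (Finset.univ.biUnion A) (Finset.univ.biUnion A) : ℝ) ^ ((1 : ℝ) / 4) ≤
      ∑ i : Fin n, (addE (A i) (A i) : ℝ) ^ ((1 : ℝ) / 4) := by
  simp only [addE_eq_addEnergy]
  set U := univ.biUnion A
  set e : Fin n → ℝ := fun i => (E[A i] : ℝ) ^ ((1 : ℝ) / 4)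
  have hU : (E[U] : ℝ) ≤ (∑ i, e i) ^ 4 := calc
    (E[U] : ℝ) = addEnergy₄ U U U U := by rw [addEnergy_eq_addEnergy₄]
    _ ≤ ∑ i, ∑ j, ∑ k, ∑ l, (addEnergy₄ (A i) (A j) (A k) (A l) : ℝ) := by
      exact_mod_cast addEnergy₄_biUnion_le univ univ univ univ A A A A
    _ ≤ ∑ i, ∑ j, ∑ k, ∑ l, e i * e j * (e k * e l) := by
      gcongr; exact addEnergy₄_le_mul_rpow ..
    _ = (∑ i, e i) ^ 4 := by
      rw [show (∑ i, e i) ^ 4 = (∑ i, e i) * (∑ j, e j) * ((∑ k, e k) * ∑ l, e l) by ring]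
      simp_rw [sum_mul_sum]
      exact sum_congr rfl fun i _ => sum_comm
  rw [one_div, Real.rpow_inv_le_iff_of_pos (by positivity) (by positivity) four_pos]
  exact_mod_cast hU
end

section
/- Let G be an abelian group, A ⊆ G finite, K ≥ 1 real, and k ≥ 2 an integer. Suppose E^+(A) ≥ |A|^3/K. Then there exist sets A_* ⊆ A and P ⊆ A−A such that |A_*| ≥ |A|/(8kK), |P| ≤ 8kK|A|, and for every choice of a_1,…,a_k ∈ A_* one has |A ∩ (P+a_1) ∩ ⋯ ∩ (P+a_k)| ≥ |A|/(4K). -/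
/-!
Write `r x = #(A ∩ (A + x))` for the number of representations of `x` as a difference of two
elements of `A`, so that `∑ r = #A ^ 2` and `∑ r ^ 2 = E(A)`. Take `P` to be the differences with
`r ≥ τ := #A / (8kK)`; Markov gives `#P ≤ #A ^ 2 / τ`.

Counting pairs `(z, a)` of `A ∩ (A + x)` by their difference `s = z - a` gives a quantity symmetric
in `x` and `s`, so the number of such pairs with `s ∉ P`, summed over `x`, is
`∑_{r s < τ} r s ^ 2 ≤ τ #A ^ 2`. The energy, on the other hand, is carried by the `x` with
`r x ≥ #A / (2K)`, so one of them has at most `r x ^ 2 / (4k)` pairs with difference outside `P`.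
In `S = A ∩ (A + x)`, the elements with at most `#S / (2k)` such partners form `A_*`, which by
Markov is half of `S`; any `k` of them leave at least `#S / 2` elements `z ∈ S` with every
`z - aᵢ ∈ P`.
-/

open Finset Pointwise

namespace Finset

variable {α : Type*} (S : Finset α) (R : α → α → Prop) [DecidableRel R]

lemma sum_card_filter_rel_eq_card_filter_product :
    ∑ a ∈ S, #{z ∈ S | R z a} = #{p ∈ S ×ˢ S | R p.1 p.2} := by
  simp only [card_filter, sum_product_right]

lemma mul_card_filter_lt_card_filter_rel_le (d : ℝ) :
    d * #{a ∈ S | d < #{z ∈ S | R z a}} ≤ #{p ∈ S ×ˢ S | R p.1 p.2} := by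
  rw [← sum_card_filter_rel_eq_card_filter_product, Nat.cast_sum, mul_comm]
  calc _ ≤ ∑ a ∈ S with d < #{z ∈ S | R z a}, (#{z ∈ S | R z a} : ℝ) := by
        simpa using card_nsmul_le_sum _ (fun a => (#{z ∈ S | R z a} : ℝ)) _
          fun a ha => (mem_filter.1 ha).2.le
    _ ≤ ∑ a ∈ S, (#{z ∈ S | R z a} : ℝ) :=
        sum_le_sum_of_subset_of_nonneg (filter_subset _ _) fun _ _ _ => by positivity

lemma card_le_card_filter_forall_not_add_sum {ι : Type*} [Fintype ι] (a : ι → α)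
    [DecidablePred fun z => ∀ i, ¬R z (a i)] :
    #S ≤ #{z ∈ S | ∀ i, ¬R z (a i)} + ∑ i, #{z ∈ S | R z (a i)} := by
  classical
  rw [← card_filter_add_card_filter_not (fun z => ∀ i, ¬R z (a i))]
  gcongr
  refine le_trans (card_le_card fun z hz => ?_) card_biUnion_le
  simp only [mem_filter, not_forall, not_not] at hz
  obtain ⟨hz, i, hi⟩ := hz
  exact mem_biUnion.2 ⟨i, mem_univ _, mem_filter.2 ⟨hz, hi⟩⟩

theorem exists_large_subset_forall_card_filter_forall_not {k : ℕ} (hk : 0 < k)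
    (hR : (#{p ∈ S ×ˢ S | R p.1 p.2} : ℝ) ≤ #S ^ 2 / (4 * k)) :
    ∃ T ⊆ S, (#S : ℝ) / 2 ≤ #T ∧
      ∀ a : Fin k → α, (∀ i, a i ∈ T) → (#S : ℝ) / 2 ≤ #{z ∈ S | ∀ i, ¬R z (a i)} := by
  set d : ℝ := #S / (2 * k)
  refine ⟨{a ∈ S | (#{z ∈ S | R z a} : ℝ) ≤ d}, filter_subset _ _, ?_, fun a ha => ?_⟩
  · obtain hS | hS := S.eq_empty_or_nonempty
    · simp [hS]
    have hd : 0 < d := by positivity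
    have hsplit := card_filter_add_card_filter_not (s := S)
      (fun a => (#{z ∈ S | R z a} : ℝ) ≤ d)
    simp only [not_le] at hsplit
    have hmarkov := (mul_card_filter_lt_card_filter_rel_le S R d).trans hR
    have : (#{a ∈ S | d < #{z ∈ S | R z a}} : ℝ) ≤ #S / 2 := by
      rw [← mul_le_mul_iff_right₀ hd]
      calc _ ≤ (#S : ℝ) ^ 2 / (4 * k) := hmarkov
        _ = d * (#S / 2) := by simp only [d]; field_simp; ring
    have := congrArg (Nat.cast (R := ℝ)) hsplit
    push_cast at this
    linarith
  · have hunion : (#S : ℝ) ≤ #{z ∈ S | ∀ i, ¬R z (a i)} + ∑ i, (#{z ∈ S | R z (a i)} : ℝ) := by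
      exact_mod_cast card_le_card_filter_forall_not_add_sum S R a
    have hdeg : ∑ i, (#{z ∈ S | R z (a i)} : ℝ) ≤ ∑ _i : Fin k, d :=
      sum_le_sum fun i _ => (mem_filter.1 (ha i)).2
    have : ∑ _i : Fin k, d = #S / 2 := by
      rw [sum_const, card_univ, Fintype.card_fin, nsmul_eq_mul]
      simp only [d]
      field_simp
    linarith

end Finset

namespace SchoenBSG

variable {G : Type*} [AddCommGroup G] [DecidableEq G] {A : Finset G}

/-- `A ∩ (A + x)`, whose size is the number of ways of writing `x = a - b` with `a, b ∈ A`. -/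
def overlap (A : Finset G) (x : G) : Finset G := {z ∈ A | z - x ∈ A}

lemma overlap_subset (x : G) : overlap A x ⊆ A := filter_subset _ _

lemma card_filter_sub_eq_card_overlap (A : Finset G) (x : G) :
    #{p ∈ A ×ˢ A | p.1 - p.2 = x} = #(overlap A x) := by
  refine card_nbij' Prod.fst (fun z => (z, z - x)) ?_ ?_ ?_ ?_ <;>
    simp +contextual [Set.MapsTo, Set.LeftInvOn, overlap, Prod.ext_iff, sub_eq_iff_eq_add']
  grind

lemma sum_card_overlap (A : Finset G) : ∑ x ∈ A - A, #(overlap A x) = #A ^ 2 := by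
  simp_rw [← card_filter_sub_eq_card_overlap, sum_card_fiberwise_eq_card_filter]
  rw [filter_true_of_mem fun p hp => sub_mem_sub (mem_product.1 hp).1 (mem_product.1 hp).2,
    card_product, sq]

lemma addE_self_eq_sum_card_overlap_sq (A : Finset G) :
    addE A A = ∑ x ∈ A - A, #(overlap A x) ^ 2 := by
  rw [addE, card_eq_sum_card_fiberwise (f := fun q => q.1.1 - q.1.2) (t := A - A)]
  · refine sum_congr rfl fun x _ => ?_
    rw [sq, ← card_product, filter_filter]
    refine card_nbij' (fun q => (q.1.1, q.2.2)) (fun p => ((p.1, p.1 - x), (p.2 - x, p.2)))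
      ?_ ?_ ?_ ?_
    · rintro ⟨⟨a₁, a₂⟩, b₁, b₂⟩ hq
      simp only [coe_filter, mem_product] at hq
      obtain ⟨⟨⟨ha₁, ha₂⟩, hb₁, hb₂⟩, hab, rfl⟩ := hq
      have : b₂ - (a₁ - a₂) = b₁ := by grind
      simp [overlap, *]
    · rintro ⟨a, b⟩ h
      simp only [mem_coe, mem_product, overlap, mem_filter] at h
      obtain ⟨⟨ha, hax⟩, hb, hbx⟩ := h
      simp only [coe_filter, mem_product, Set.mem_ofPred_eq]
      exact ⟨⟨⟨ha, hax⟩, hbx, hb⟩, by abel, sub_sub_cancel _ _⟩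
    · rintro ⟨⟨a₁, a₂⟩, b₁, b₂⟩ hq
      simp only [coe_filter, mem_product] at hq
      obtain ⟨-, hab, rfl⟩ := hq
      have : b₂ - (a₁ - a₂) = b₁ := by grind
      simp [this]
    · intro p _
      rfl
  · rintro q hq
    simp only [coe_filter, mem_product] at hq
    exact sub_mem_sub hq.1.1.1 hq.1.1.2

lemma card_filter_sub_eq_comm (A : Finset G) (x s : G) :
    #{p ∈ overlap A x ×ˢ overlap A x | p.1 - p.2 = s} =
      #{p ∈ overlap A s ×ˢ overlap A s | p.1 - p.2 = x} := by
  refine card_nbij' (fun p => (p.1, p.1 - x)) (fun p => (p.1, p.1 - s)) ?_ ?_ ?_ ?_ <;>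
  · rintro ⟨z, a⟩ hp
    simp only [coe_filter, mem_product, overlap, mem_filter] at hp
    obtain ⟨⟨⟨hz, hzx⟩, ha, hax⟩, rfl⟩ := hp
    simp [overlap, *]

lemma sum_card_filter_sub_mem (A t : Finset G) :
    ∑ x ∈ A - A, #{p ∈ overlap A x ×ˢ overlap A x | p.1 - p.2 ∈ t} =
      ∑ s ∈ t, #(overlap A s) ^ 2 := by
  simp_rw [← sum_card_fiberwise_eq_card_filter]
  rw [sum_comm]
  refine sum_congr rfl fun s _ => ?_
  rw [sum_congr rfl fun x _ => card_filter_sub_eq_comm A x s, sum_card_fiberwise_eq_card_filter,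
    filter_true_of_mem, card_product, sq]
  rintro ⟨z, a⟩ hp
  simp only [mem_product] at hp
  exact sub_mem_sub (overlap_subset s hp.1) (overlap_subset s hp.2)

lemma sum_sq_card_overlap_of_lt_le (A : Finset G) {τ : ℝ} (hτ : 0 ≤ τ) :
    ∑ s ∈ A - A with (#(overlap A s) : ℝ) < τ, (#(overlap A s) : ℝ) ^ 2 ≤ τ * #A ^ 2 := by
  calc ∑ s ∈ A - A with (#(overlap A s) : ℝ) < τ, (#(overlap A s) : ℝ) ^ 2
      ≤ ∑ s ∈ A - A with (#(overlap A s) : ℝ) < τ, τ * #(overlap A s) := by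
        refine sum_le_sum fun s hs => ?_
        rw [sq]
        exact mul_le_mul_of_nonneg_right (mem_filter.1 hs).2.le (Nat.cast_nonneg _)
    _ ≤ ∑ s ∈ A - A, τ * #(overlap A s) :=
        sum_le_sum_of_subset_of_nonneg (filter_subset _ _) fun _ _ _ => by positivity
    _ = τ * #A ^ 2 := by rw [← mul_sum, ← Nat.cast_sum, sum_card_overlap, Nat.cast_pow]

lemma card_filter_div_le_card_overlap_le (A : Finset G) {c : ℝ} (hc : 0 < c) :
    (#{s ∈ A - A | #A / c ≤ (#(overlap A s) : ℝ)} : ℝ) ≤ c * #A := by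
  obtain rfl | hA := A.eq_empty_or_nonempty
  · simp
  have hmarkov : (#{s ∈ A - A | #A / c ≤ (#(overlap A s) : ℝ)} : ℝ) * (#A / c) ≤ #A ^ 2 :=
    calc _ ≤ ∑ s ∈ A - A with #A / c ≤ (#(overlap A s) : ℝ), (#(overlap A s) : ℝ) := by
          simpa using card_nsmul_le_sum _ (fun s => (#(overlap A s) : ℝ)) _
            fun s hs => (mem_filter.1 hs).2
      _ ≤ ∑ s ∈ A - A, (#(overlap A s) : ℝ) :=
          sum_le_sum_of_subset_of_nonneg (filter_subset _ _) fun _ _ _ => by positivity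
      _ = #A ^ 2 := mod_cast sum_card_overlap A
  calc _ ≤ (#A : ℝ) ^ 2 / (#A / c) := (le_div_iff₀ (by positivity)).2 hmarkov
    _ = c * #A := by field_simp

lemma exists_popular_overlap_few_unpopular_diffs {K : ℝ} (hK : 0 < K) {k : ℕ} (hk : 0 < k)
    (hE : (#A : ℝ) ^ 3 / K ≤ addE A A) :
    ∃ x, #A / (2 * K) ≤ (#(overlap A x) : ℝ) ∧
      (#{p ∈ overlap A x ×ˢ overlap A x |
          p.1 - p.2 ∈ {s ∈ A - A | (#(overlap A s) : ℝ) < #A / (8 * k * K)}} : ℝ) ≤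
        #(overlap A x) ^ 2 / (4 * k) := by
  obtain rfl | hA := A.eq_empty_or_nonempty
  · exact ⟨0, by simp [overlap]⟩
  set m := (#A : ℝ)
  set popular := {x ∈ A - A | m / (2 * K) ≤ (#(overlap A x) : ℝ)}
  have hpopular : m ^ 3 / (2 * K) ≤ ∑ x ∈ popular, (#(overlap A x) : ℝ) ^ 2 := by
    have henergy : (addE A A : ℝ) = ∑ x ∈ A - A, (#(overlap A x) : ℝ) ^ 2 := by
      exact_mod_cast addE_self_eq_sum_card_overlap_sq A
    have hsplit := sum_filter_add_sum_filter_not (A - A)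
      (fun x => m / (2 * K) ≤ (#(overlap A x) : ℝ)) fun x => (#(overlap A x) : ℝ) ^ 2
    have hunpopular := sum_sq_card_overlap_of_lt_le A (τ := m / (2 * K)) (by positivity)
    simp only [not_le] at hsplit
    have : m ^ 3 / K - m / (2 * K) * m ^ 2 = m ^ 3 / (2 * K) := by field_simp; ring
    linarith
  have hpopular_nonempty : popular.Nonempty := by
    refine nonempty_of_sum_ne_zero (f := fun x => (#(overlap A x) : ℝ) ^ 2) ?_
    exact (lt_of_lt_of_le (by positivity) hpopular).ne'
  refine (exists_le_of_sum_le hpopular_nonempty ?_).imp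
    fun x ⟨hx, hle⟩ => ⟨(mem_filter.1 hx).2, hle⟩
  calc ∑ x ∈ popular, (#{p ∈ overlap A x ×ˢ overlap A x |
          p.1 - p.2 ∈ {s ∈ A - A | (#(overlap A s) : ℝ) < m / (8 * k * K)}} : ℝ)
      ≤ ∑ x ∈ A - A, (#{p ∈ overlap A x ×ˢ overlap A x |
          p.1 - p.2 ∈ {s ∈ A - A | (#(overlap A s) : ℝ) < m / (8 * k * K)}} : ℝ) :=
        sum_le_sum_of_subset_of_nonneg (filter_subset _ _) fun _ _ _ => by positivity
    _ = ∑ s ∈ A - A with (#(overlap A s) : ℝ) < m / (8 * k * K), (#(overlap A s) : ℝ) ^ 2 := by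
        exact_mod_cast sum_card_filter_sub_mem A _
    _ ≤ m / (8 * k * K) * m ^ 2 := sum_sq_card_overlap_of_lt_le A (by positivity)
    _ = m ^ 3 / (2 * K) / (4 * k) := by field_simp; ring
    _ ≤ (∑ x ∈ popular, (#(overlap A x) : ℝ) ^ 2) / (4 * k) := by gcongr
    _ = ∑ x ∈ popular, (#(overlap A x) : ℝ) ^ 2 / (4 * k) := sum_div _ _ _

end SchoenBSG

open SchoenBSG in
theorem stmt5 {G : Type*} [AddCommGroup G] [DecidableEq G] (A : Finset G) (K : ℝ) (hK : 1 ≤ K)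
    (k : ℕ) (hk : 2 ≤ k) (hE : (A.card : ℝ) ^ 3 / K ≤ addE A A) :
    ∃ Astar P : Finset G, Astar ⊆ A ∧ P ⊆ A - A ∧
      (A.card : ℝ) / (8 * k * K) ≤ Astar.card ∧
      (P.card : ℝ) ≤ 8 * k * K * A.card ∧
      ∀ a : Fin k → G, (∀ i, a i ∈ Astar) →
        (A.card : ℝ) / (4 * K) ≤
          ((A.filter fun y => ∀ i, y ∈ P.image (· + a i)).card : ℝ) := by
  have hK₀ : 0 < K := by linarith
  have hk₀ : 0 < k := by omega
  obtain ⟨x, hx_popular, hx_few⟩ := exists_popular_overlap_few_unpopular_diffs hK₀ hk₀ hE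
  obtain ⟨T, hT_sub, hT_card, hT_good⟩ :=
    exists_large_subset_forall_card_filter_forall_not (overlap A x)
      (fun z a => z - a ∈ {s ∈ A - A | (#(overlap A s) : ℝ) < #A / (8 * k * K)}) hk₀ hx_few
  have hhalf : (#A : ℝ) / (4 * K) ≤ #(overlap A x) / 2 := by
    calc (#A : ℝ) / (4 * K) = #A / (2 * K) / 2 := by field_simp; ring
      _ ≤ _ := by gcongr
  refine ⟨T, {s ∈ A - A | #A / (8 * k * K) ≤ (#(overlap A s) : ℝ)},
    hT_sub.trans (overlap_subset x), filter_subset _ _, ?_,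
    card_filter_div_le_card_overlap_le A (by positivity), fun a ha => ?_⟩
  · calc (#A : ℝ) / (8 * k * K) ≤ #A / (4 * K) := by
          gcongr
          have : (2 : ℝ) ≤ k := by exact_mod_cast hk
          nlinarith
      _ ≤ #T := hhalf.trans hT_card
  · refine hhalf.trans <| (hT_good a ha).trans <| Nat.cast_le.2 <| card_le_card fun z hz => ?_
    simp only [mem_filter] at hz ⊢
    refine ⟨overlap_subset x hz.1, fun i => mem_image.2 ⟨z - a i, ?_, sub_add_cancel _ _⟩⟩
    have hdiff : z - a i ∈ A - A :=
      sub_mem_sub (overlap_subset x hz.1) (overlap_subset x (hT_sub (ha i)))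
    simpa [hdiff] using hz.2 i
end

section
/- Let p be a prime, A ⊆ F_p a finite set, and X ⊆ F_p^*. Then Σ_{x ∈ X} (E^+(A, xA) − |A|^4/p) ≤ p·|A|^2. -/
/-!
Count `E⁺(A, xA)` as the number of `(a, a', b, b') ∈ A⁴` with `a + x b = a' + x b'`. Summed over
all `x` in the finite field `K`, a quadruple with `b ≠ b'` is counted once, one with `a = a'` and
`b = b'` is counted `|K|` times, and the others never, so `∑ₓ E⁺(A, xA) ≤ |K||A|² + |A|⁴ − |A|³`.
By Cauchy–Schwarz, `|A|⁴ ≤ |A + xA| E⁺(A, xA) ≤ |K| E⁺(A, xA)`, so every summand is nonnegative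
and the sum over `X` is at most the sum over all `x ≠ 0`, which is
`≤ |K||A|² − |A|³ + |A|⁴/|K| ≤ |K||A|²`.
-/

open Finset Pointwise

lemma addE_image_eq_card_filter {G H : Type*} [AddCommGroup G] [DecidableEq G] (A : Finset G)
    (B : Finset H) {f : H → G} (hf : Function.Injective f) :
    addE A (B.image f) = #{q ∈ (A ×ˢ A) ×ˢ B ×ˢ B | q.1.1 + f q.2.1 = q.1.2 + f q.2.2} := by
  symm
  refine card_bij (fun q _ => (q.1, f q.2.1, f q.2.2)) ?_ ?_ ?_
  · rintro ⟨⟨a, a'⟩, b, b'⟩ h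
    simp only [mem_filter, mem_product] at h ⊢
    exact ⟨⟨h.1.1, mem_image_of_mem f h.1.2.1, mem_image_of_mem f h.1.2.2⟩, h.2⟩
  · rintro ⟨⟨a, a'⟩, b, b'⟩ - ⟨⟨c, c'⟩, d, d'⟩ - h
    simp only [Prod.mk.injEq] at h
    simp [h.1, hf h.2.1, hf h.2.2]
  · rintro ⟨⟨a, a'⟩, b, b'⟩ h
    simp only [mem_filter, mem_product, mem_image] at h
    obtain ⟨⟨ha, ⟨c, hc, rfl⟩, ⟨c', hc', rfl⟩⟩, h⟩ := h
    exact ⟨((a, a'), c, c'), by simp [*]⟩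

lemma sq_card_mul_sq_card_le_card_mul_addE {G : Type*} [AddCommGroup G] [Fintype G]
    [DecidableEq G] (A B : Finset G) :
    #A ^ 2 * #B ^ 2 ≤ Fintype.card G * addE A B :=
  (le_card_add_mul_addEnergy A B).trans (Nat.mul_le_mul_right _ (card_le_univ _))

section FiniteField

variable {K : Type*} [Field K] [DecidableEq K]

lemma addE_image_mul_eq_card_filter (A : Finset K) {x : K} (hx : x ≠ 0) :
    addE A (A.image (x * ·)) =
      #{q ∈ (A ×ˢ A) ×ˢ A ×ˢ A | q.1.1 + x * q.2.1 = q.1.2 + x * q.2.2} :=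
  addE_image_eq_card_filter A A (mul_right_injective₀ hx)

variable [Fintype K]

-- There are `|K|` solutions `x` if `(a, b) = (a', b')`, none if only `b = b'`, and one otherwise.
lemma card_filter_add_mul_eq_add_mul_add_ite (a a' b b' : K) :
    #{x | a + x * b = a' + x * b'} + (if b = b' then 1 else 0) =
      (if a = a' ∧ b = b' then Fintype.card K else 0) + 1 := by
  by_cases hb : b = b'
  · subst hb
    by_cases ha : a = a' <;> simp [ha]
  · have : ({x | a + x * b = a' + x * b'} : Finset K) = {(a' - a) / (b - b')} := by
      ext x
      rw [mem_filter_univ, mem_singleton, eq_div_iff (sub_ne_zero.2 hb)]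
      constructor <;> intro h <;> linear_combination h
    simp [this, hb]

lemma sum_card_filter_add_mul_add_card_pow_three (A : Finset K) :
    ∑ x : K, #{q ∈ (A ×ˢ A) ×ˢ A ×ˢ A | q.1.1 + x * q.2.1 = q.1.2 + x * q.2.2} + #A ^ 3 =
      Fintype.card K * #A ^ 2 + #A ^ 4 := by
  have h3 : #A ^ 3 = ∑ q ∈ (A ×ˢ A) ×ˢ A ×ˢ A, if q.2.1 = q.2.2 then 1 else 0 := by
    have : {q ∈ (A ×ˢ A) ×ˢ A ×ˢ A | q.2.1 = q.2.2} = (A ×ˢ A) ×ˢ A.diag := by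
      ext ⟨⟨a, a'⟩, b, b'⟩
      simp only [mem_filter, mem_product, mem_diag]; grind
    rw [sum_boole, Nat.cast_id, this, card_product, card_product, diag_card]
    ring
  have h2 : Fintype.card K * #A ^ 2 = ∑ q ∈ (A ×ˢ A) ×ˢ A ×ˢ A,
      if q.1.1 = q.1.2 ∧ q.2.1 = q.2.2 then Fintype.card K else 0 := by
    have : {q ∈ (A ×ˢ A) ×ˢ A ×ˢ A | q.1.1 = q.1.2 ∧ q.2.1 = q.2.2} = A.diag ×ˢ A.diag := by
      ext ⟨⟨a, a'⟩, b, b'⟩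
      simp only [mem_filter, mem_product, mem_diag]; grind
    rw [← sum_filter, sum_const, smul_eq_mul, this, card_product, diag_card]
    ring
  calc _ = ∑ q ∈ (A ×ˢ A) ×ˢ A ×ˢ A,
        (#{x | q.1.1 + x * q.2.1 = q.1.2 + x * q.2.2} + if q.2.1 = q.2.2 then 1 else 0) := by
        simp_rw [h3, sum_add_distrib, card_filter]
        rw [sum_comm]
    _ = ∑ q ∈ (A ×ˢ A) ×ˢ A ×ˢ A,
        ((if q.1.1 = q.1.2 ∧ q.2.1 = q.2.2 then Fintype.card K else 0) + 1) :=
        sum_congr rfl fun q _ => card_filter_add_mul_eq_add_mul_add_ite _ _ _ _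
    _ = _ := by
        rw [sum_add_distrib, ← h2, sum_const, card_product, card_product, smul_eq_mul, mul_one]
        ring

lemma card_pow_four_le_card_mul_addE_image_mul (A : Finset K) {x : K} (hx : x ≠ 0) :
    #A ^ 4 ≤ Fintype.card K * addE A (A.image (x * ·)) := by
  have h := sq_card_mul_sq_card_le_card_mul_addE A (A.image (x * ·))
  rwa [card_image_of_injective _ (mul_right_injective₀ hx), ← pow_add] at h

lemma sum_addE_image_mul_add_card_pow_three_le (A : Finset K) :
    ∑ x ∈ univ.erase 0, addE A (A.image (x * ·)) + #A ^ 3 ≤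
      Fintype.card K * #A ^ 2 + #A ^ 4 := by
  rw [← sum_card_filter_add_mul_add_card_pow_three, add_le_add_iff_right,
    sum_congr rfl fun x hx => addE_image_mul_eq_card_filter A (ne_of_mem_erase hx)]
  exact sum_le_sum_of_subset (subset_univ _)

theorem sum_addE_image_mul_sub_le (A X : Finset K) (hX : 0 ∉ X) :
    ∑ x ∈ X, ((addE A (A.image (x * ·)) : ℝ) - #A ^ 4 / Fintype.card K) ≤
      Fintype.card K * #A ^ 2 := by
  have hq : (0 : ℝ) < Fintype.card K := by positivity
  have hnq : (#A : ℝ) ≤ Fintype.card K := by exact_mod_cast card_le_univ A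
  have hcard : (#(univ.erase (0 : K)) : ℝ) = Fintype.card K - 1 := by
    rw [eq_sub_iff_add_eq]; exact_mod_cast card_erase_add_one (mem_univ (0 : K))
  have hsum : ∑ x ∈ univ.erase 0, (addE A (A.image (x * ·)) : ℝ) + #A ^ 3 ≤
      Fintype.card K * #A ^ 2 + #A ^ 4 := by
    exact_mod_cast sum_addE_image_mul_add_card_pow_three_le A
  have hfour : (#A : ℝ) ^ 4 / Fintype.card K ≤ #A ^ 3 := by
    rw [div_le_iff₀ hq, pow_succ]; gcongr
  calc _ ≤ ∑ x ∈ univ.erase 0, ((addE A (A.image (x * ·)) : ℝ) - #A ^ 4 / Fintype.card K) := by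
        refine sum_le_sum_of_subset_of_nonneg (fun x hx => mem_erase.2 ⟨?_, mem_univ x⟩) ?_
        · rintro rfl; exact hX hx
        · intro x hx _
          rw [sub_nonneg, div_le_iff₀ hq, mul_comm]
          exact_mod_cast card_pow_four_le_card_mul_addE_image_mul A (ne_of_mem_erase hx)
    _ = ∑ x ∈ univ.erase 0, (addE A (A.image (x * ·)) : ℝ) -
          (Fintype.card K - 1) * (#A ^ 4 / Fintype.card K) := by
        rw [sum_sub_distrib, sum_const, nsmul_eq_mul, hcard]
    _ ≤ Fintype.card K * #A ^ 2 := by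
        have : ((Fintype.card K : ℝ) - 1) * (#A ^ 4 / Fintype.card K) =
            #A ^ 4 - #A ^ 4 / Fintype.card K := by field_simp
        linarith

end FiniteField

theorem stmt10 (p : ℕ) [Fact p.Prime] (A X : Finset (ZMod p)) (hX : (0 : ZMod p) ∉ X) :
    ∑ x ∈ X, ((addE A (A.image fun a => x * a) : ℝ) - (A.card : ℝ) ^ 4 / p) ≤
      (p : ℝ) * A.card ^ 2 := by
  simpa only [ZMod.card] using sum_addE_image_mul_sub_le A X hX
end

section
/- Let p be a prime and A ⊆ F_p with |A| > p^{1/2}. Then the set (A−A)/(A−A) = {(a−b)/(c−d) : a,b,c,d ∈ A, c ≠ d} equals all of F_p. -/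
/-!
Fix `x`. The map `(c, a) ↦ a - x * c` sends the `|A|² > p` pairs of `A × A` into `𝔽_p`, so two
distinct pairs `(c, a) ≠ (d, b)` collide. Then `a - b = x * (c - d)`, and `c ≠ d` since otherwise
`a = b` too; dividing by `c - d` gives `x = (a - b) / (c - d)`.
-/

open Finset

theorem exists_sub_eq_mul_sub_of_card_lt {R : Type*} [Ring R] [Fintype R] (A : Finset R)
    (hA : Fintype.card R < #A * #A) (x : R) :
    ∃ a ∈ A, ∃ b ∈ A, ∃ c ∈ A, ∃ d ∈ A, c ≠ d ∧ a - b = x * (c - d) := by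
  have hcard : #(univ : Finset R) < #(A ×ˢ A) := by rwa [card_univ, card_product]
  obtain ⟨⟨c, a⟩, hca, ⟨d, b⟩, hdb, hne, hcollide⟩ :=
    exists_ne_map_eq_of_card_lt_of_maps_to hcard (f := fun q => q.2 - x * q.1)
      (fun _ _ => mem_coe.2 (mem_univ _))
  rw [mem_product] at hca hdb
  have hab : a - b = x * (c - d) := by
    rw [mul_sub]; exact sub_eq_sub_iff_sub_eq_sub.2 hcollide
  refine ⟨a, hca.2, b, hdb.2, c, hca.1, d, hdb.1, ?_, hab⟩
  rintro rfl
  exact hne (by rw [sub_self, mul_zero, sub_eq_zero] at hab; rw [hab])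

theorem exists_div_sub_eq_of_card_lt {K : Type*} [Field K] [Fintype K] (A : Finset K)
    (hA : Fintype.card K < #A * #A) (x : K) :
    ∃ a ∈ A, ∃ b ∈ A, ∃ c ∈ A, ∃ d ∈ A, c ≠ d ∧ (a - b) / (c - d) = x := by
  obtain ⟨a, ha, b, hb, c, hc, d, hd, hcd, hab⟩ := exists_sub_eq_mul_sub_of_card_lt A hA x
  exact ⟨a, ha, b, hb, c, hc, d, hd, hcd, by rw [hab, mul_div_cancel_right₀ _ (sub_ne_zero.2 hcd)]⟩

theorem stmt16 (p : ℕ) [Fact p.Prime] (A : Finset (ZMod p))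
    (hA : Real.sqrt p < A.card) :
    ∀ x : ZMod p, ∃ a ∈ A, ∃ b ∈ A, ∃ c ∈ A, ∃ d ∈ A,
      c ≠ d ∧ (a - b) / (c - d) = x := by
  have hp : Fintype.card (ZMod p) < #A * #A := by
    rw [ZMod.card, ← sq]
    exact_mod_cast Real.lt_sq_of_sqrt_lt hA
  exact exists_div_sub_eq_of_card_lt A hp
end
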